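/- Let M and N be quantum channels satisfying s-detailed balance with respect to a full-rank state ρ. Suppose N has ρ as its unique fixed point and the spectrum of N is contained in [0,1]. Then the spectral gap of the composed channel M∘N∘M is at least the spectral gap of N: gap(M∘N∘M) ≥ gap(N). -/

import Mathlib

/-! Write `Φ = M†`. By detailed balance `⟨X, Φ N† Φ X⟩_s = ⟨Φ X, N† Φ X⟩_s`, and `Φ X ⟂ 1`
because `Φ 1 = 1`, so the gap inequality for `N` bounds this by `(1 - g) ‖Φ X‖_s²`. It then
suffices that `Φ` is a contraction for `‖·‖_s`. Being self-adjoint for `⟨·,·⟩_s`, it is one as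
soon as its eigenvalues lie in `[-1, 1]`, and that is seen in the norm `tr(Aᴴ A ρ)`, where the
Kadison–Schwarz inequality `Φ(A)ᴴ Φ(A) ≤ Φ(Aᴴ A)` and `M ρ = ρ` (detailed balance again, with
`Φ 1 = 1`) make `Φ` contractive.
If `g > 1` both sides have a fixed sign instead: `N†` is positive for `⟨·,·⟩_s`, its eigenvalues
being those of `N`, to which it is similar through `B ↦ ρ^{1-s} B ρ^s`. -/

open Matrix
open scoped ComplexOrder

/-- Real matrix power of a Hermitian matrix, via the functional calculus. -/
noncomputable def mpow {n : Type*} [Fintype n] [DecidableEq n]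
    (ρ : Matrix n n ℂ) (hρ : ρ.IsHermitian) (r : ℝ) : Matrix n n ℂ :=
  hρ.cfc (fun x => x ^ r)

/-- The weighted sesquilinear form `⟨A,B⟩_s = tr(Aᴴ ρ^{1-s} B ρ^s)`. -/
noncomputable def wInner {n : Type*} [Fintype n] [DecidableEq n]
    (ρ : Matrix n n ℂ) (hρ : ρ.IsHermitian) (s : ℝ) (A B : Matrix n n ℂ) : ℂ :=
  (Aᴴ * mpow ρ hρ (1 - s) * B * mpow ρ hρ s).trace

open scoped MatrixOrder InnerProductSpace
open Module.End

def LinearEquiv.unitsMulLeftRight (R : Type*) {A : Type*} [CommSemiring R] [Semiring A]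
    [Algebra R A] (u v : Aˣ) : A ≃ₗ[R] A where
  toFun x := u * x * v
  invFun x := ↑u⁻¹ * x * ↑v⁻¹
  map_add' x y := by simp only [mul_add, add_mul]
  map_smul' c x := by simp only [mul_smul_comm, smul_mul_assoc, RingHom.id_apply]
  left_inv x := by simp [mul_assoc]
  right_inv x := by simp [mul_assoc]

@[simp]
lemma LinearEquiv.unitsMulLeftRight_apply (R : Type*) {A : Type*} [CommSemiring R] [Semiring A]
    [Algebra R A] (u v : Aˣ) (x : A) : unitsMulLeftRight R u v x = u * x * v :=
  rfl

lemma LinearEquiv.hasEigenvalue_conj_iff {K V W : Type*} [Field K] [AddCommGroup V] [Module K V]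
    [AddCommGroup W] [Module K W] [FiniteDimensional K V] [FiniteDimensional K W]
    (e : V ≃ₗ[K] W) (f : Module.End K V) (μ : K) :
    HasEigenvalue (e.conj f) μ ↔ HasEigenvalue f μ := by
  rw [hasEigenvalue_iff_isRoot_charpoly, hasEigenvalue_iff_isRoot_charpoly, e.charpoly_conj]

section InnerProductSpace

variable {𝕜 E : Type*} [RCLike 𝕜] [NormedAddCommGroup E] [InnerProductSpace 𝕜 E]

lemma LinearEquiv.isSymmetric_conj {V : Type*} [AddCommGroup V] [Module 𝕜 V]
    (e : V ≃ₗ[𝕜] E) {f : Module.End 𝕜 V} (h : ∀ a b, ⟪e (f a), e b⟫_𝕜 = ⟪e a, e (f b)⟫_𝕜) :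
    (e.conj f).IsSymmetric := by
  intro x y
  obtain ⟨a, rfl⟩ := e.surjective x
  obtain ⟨b, rfl⟩ := e.surjective y
  simpa [LinearEquiv.conj_apply] using h a b

variable [FiniteDimensional 𝕜 E] {T : E →ₗ[𝕜] E}

open RCLike in
theorem LinearMap.IsSymmetric.isPositive_of_hasEigenvalue (hT : T.IsSymmetric)
    (h : ∀ μ : ℝ, HasEigenvalue T (μ : 𝕜) → 0 ≤ μ) : T.IsPositive := by
  refine ⟨hT, fun x => ?_⟩
  let b := hT.eigenvectorBasis rfl
  rw [← b.repr.inner_map_map, PiLp.inner_apply, map_sum]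
  refine Finset.sum_nonneg fun i _ => ?_
  rw [hT.eigenvectorBasis_apply_self_apply, inner_apply, map_mul (starRingEnd 𝕜), conj_ofReal,
    mul_left_comm, mul_conj, ← ofReal_pow, ← ofReal_mul, ofReal_re]
  exact mul_nonneg (h _ (hT.hasEigenvalue_eigenvalues rfl i)) (sq_nonneg _)

theorem LinearMap.IsSymmetric.norm_map_le_of_hasEigenvalue (hT : T.IsSymmetric)
    (h : ∀ μ : ℝ, HasEigenvalue T (μ : 𝕜) → |μ| ≤ 1) (x : E) : ‖T x‖ ≤ ‖x‖ := by
  let b := hT.eigenvectorBasis rfl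
  rw [← b.repr.norm_map, ← b.repr.norm_map x, EuclideanSpace.norm_eq, EuclideanSpace.norm_eq]
  gcongr with i
  rw [hT.eigenvectorBasis_apply_self_apply, norm_mul, RCLike.norm_ofReal]
  exact mul_le_of_le_one_left (norm_nonneg _) (h _ (hT.hasEigenvalue_eigenvalues rfl i))

end InnerProductSpace

section Frobenius

variable {n : Type*} [Fintype n]

noncomputable def Matrix.toEuclideanSpace : Matrix n n ℂ ≃ₗ[ℂ] EuclideanSpace ℂ (n × n) :=
  (LinearEquiv.curry ℂ ℂ n n).symm ≪≫ₗ (WithLp.linearEquiv 2 ℂ _).symm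

lemma Matrix.inner_toEuclideanSpace (A B : Matrix n n ℂ) :
    ⟪toEuclideanSpace A, toEuclideanSpace B⟫_ℂ = (Aᴴ * B).trace := by
  simp only [PiLp.inner_apply, RCLike.inner_apply, Fintype.sum_prod_type, Matrix.trace,
    Matrix.diag, Matrix.mul_apply, conjTranspose_apply]
  rw [Finset.sum_comm]
  exact Finset.sum_congr rfl fun j _ => Finset.sum_congr rfl fun i _ => mul_comm _ _

end Frobenius

section Kraus

variable {n ι : Type*} [Fintype n] [Fintype ι]

noncomputable def krausMap (K : ι → Matrix n n ℂ) : Module.End ℂ (Matrix n n ℂ) :=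
  ∑ u, LinearMap.mulLeftRight ℂ (K u, (K u)ᴴ)

lemma krausMap_apply (K : ι → Matrix n n ℂ) (X : Matrix n n ℂ) :
    krausMap K X = ∑ u, K u * X * (K u)ᴴ := by
  simp [krausMap]

lemma conjTranspose_krausMap (K : ι → Matrix n n ℂ) (X : Matrix n n ℂ) :
    (krausMap K X)ᴴ = krausMap K Xᴴ := by
  simp [krausMap_apply, conjTranspose_sum, mul_assoc]

lemma trace_krausMap_mul (K : ι → Matrix n n ℂ) (A B : Matrix n n ℂ) :
    (krausMap K A * B).trace = (A * krausMap (fun u => (K u)ᴴ) B).trace := by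
  simp only [krausMap_apply, conjTranspose_conjTranspose, Finset.sum_mul, Finset.mul_sum,
    trace_sum]
  refine Finset.sum_congr rfl fun u _ => ?_
  rw [show K u * A * (K u)ᴴ * B = K u * (A * (K u)ᴴ * B) by simp only [mul_assoc],
    trace_mul_comm]
  simp only [mul_assoc]

lemma krausMap_one [DecidableEq n] {K : ι → Matrix n n ℂ} (hK : ∑ u, K u * (K u)ᴴ = 1) :
    krausMap K 1 = 1 := by
  simpa [krausMap_apply] using hK

lemma krausMap_conjTranspose_mul_self_sub [DecidableEq n] {K : ι → Matrix n n ℂ}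
    (hK : ∑ u, K u * (K u)ᴴ = 1) (A : Matrix n n ℂ) :
    krausMap K (Aᴴ * A) - (krausMap K A)ᴴ * krausMap K A =
      ∑ u, (A * (K u)ᴴ - (K u)ᴴ * krausMap K A)ᴴ * (A * (K u)ᴴ - (K u)ᴴ * krausMap K A) := by
  set S := krausMap K A
  have hS : ∑ u, (K u * Aᴴ * (K u)ᴴ) * S = Sᴴ * S := by
    rw [← Finset.sum_mul, conjTranspose_krausMap, krausMap_apply]
  have hS' : ∑ u, Sᴴ * (K u * A * (K u)ᴴ) = Sᴴ * S := by
    rw [← Finset.mul_sum, ← krausMap_apply]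
  have hSS : ∑ u, Sᴴ * (K u * (K u)ᴴ) * S = Sᴴ * S := by
    rw [← Finset.sum_mul, ← Finset.mul_sum, hK, mul_one]
  have expand : ∀ u, (A * (K u)ᴴ - (K u)ᴴ * S)ᴴ * (A * (K u)ᴴ - (K u)ᴴ * S) =
      K u * (Aᴴ * A) * (K u)ᴴ - K u * Aᴴ * (K u)ᴴ * S - Sᴴ * (K u * A * (K u)ᴴ)
        + Sᴴ * (K u * (K u)ᴴ) * S := by
    intro u
    simp only [conjTranspose_sub, conjTranspose_mul, conjTranspose_conjTranspose, sub_mul, mul_sub,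
      mul_assoc]
    abel
  rw [Finset.sum_congr rfl fun u _ => expand u]
  simp only [Finset.sum_add_distrib, Finset.sum_sub_distrib, hS, hS', hSS, ← krausMap_apply]
  abel

end Kraus

section Weighted

variable {n : Type*} [Fintype n] [DecidableEq n] {ρ : Matrix n n ℂ}

lemma mpow_zero (hρ : ρ.IsHermitian) : mpow ρ hρ 0 = 1 := by
  simp only [mpow, ← hρ.cfc_eq, Real.rpow_zero]
  exact cfc_const_one ℝ ρ

lemma mpow_one (hρ : ρ.IsHermitian) : mpow ρ hρ 1 = ρ := by
  simp only [mpow, ← hρ.cfc_eq, Real.rpow_one]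
  exact cfc_id' ℝ ρ

lemma conjTranspose_mpow (hρ : ρ.IsHermitian) (r : ℝ) : (mpow ρ hρ r)ᴴ = mpow ρ hρ r := by
  simp only [mpow, ← hρ.cfc_eq]
  exact cfc_predicate (R := ℝ) _ ρ

variable (hρ : ρ.PosDef)

lemma mpow_mul_mpow (a b : ℝ) : mpow ρ hρ.1 a * mpow ρ hρ.1 b = mpow ρ hρ.1 (a + b) := by
  simp only [mpow, ← hρ.1.cfc_eq]
  rw [← cfc_mul _ _ _ (ρ.finite_real_spectrum.continuousOn _)
    (ρ.finite_real_spectrum.continuousOn _)]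
  exact cfc_congr fun x hx => (Real.rpow_add (hρ.isStrictlyPositive.spectrum_pos hx) a b).symm

noncomputable def mpowUnit (r : ℝ) : (Matrix n n ℂ)ˣ where
  val := mpow ρ hρ.1 r
  inv := mpow ρ hρ.1 (-r)
  val_inv := by rw [mpow_mul_mpow hρ, add_neg_cancel, mpow_zero]
  inv_val := by rw [mpow_mul_mpow hρ, neg_add_cancel, mpow_zero]

@[simp]
lemma coe_mpowUnit (r : ℝ) : (mpowUnit hρ r : Matrix n n ℂ) = mpow ρ hρ.1 r :=
  rfl

noncomputable def weightEquiv (s : ℝ) : Matrix n n ℂ ≃ₗ[ℂ] Matrix n n ℂ :=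
  .unitsMulLeftRight ℂ (mpowUnit hρ (1 - s)) (mpowUnit hρ s)

lemma wInner_eq_trace_mul_weightEquiv (s : ℝ) (A B : Matrix n n ℂ) :
    wInner ρ hρ.1 s A B = (Aᴴ * weightEquiv hρ s B).trace := by
  simp [wInner, weightEquiv, mul_assoc]

lemma weightEquiv_apply_one (s : ℝ) : weightEquiv hρ s 1 = ρ := by
  simp only [weightEquiv, LinearEquiv.unitsMulLeftRight_apply, coe_mpowUnit, mul_one]
  rw [mpow_mul_mpow hρ, sub_add_cancel, mpow_one]

lemma wInner_one_eq_trace_mul (A B : Matrix n n ℂ) :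
    wInner ρ hρ.1 1 A B = (Aᴴ * B * ρ).trace := by
  simp [wInner, mpow_zero, mpow_one]

noncomputable def weightedEmbedding (s : ℝ) : Matrix n n ℂ ≃ₗ[ℂ] EuclideanSpace ℂ (n × n) :=
  .unitsMulLeftRight ℂ (mpowUnit hρ ((1 - s) / 2)) (mpowUnit hρ (s / 2)) ≪≫ₗ toEuclideanSpace

lemma inner_weightedEmbedding (s : ℝ) (A B : Matrix n n ℂ) :
    ⟪weightedEmbedding hρ s A, weightedEmbedding hρ s B⟫_ℂ = wInner ρ hρ.1 s A B := by
  set L := mpow ρ hρ.1 ((1 - s) / 2)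
  set R := mpow ρ hρ.1 (s / 2)
  have hL : L * L = mpow ρ hρ.1 (1 - s) := by rw [mpow_mul_mpow hρ, add_halves]
  have hR : R * R = mpow ρ hρ.1 s := by rw [mpow_mul_mpow hρ, add_halves]
  rw [weightedEmbedding, LinearEquiv.trans_apply, LinearEquiv.trans_apply, inner_toEuclideanSpace]
  calc ((L * A * R)ᴴ * (L * B * R)).trace
      = (R * (Aᴴ * (L * L) * B * R)).trace := by
        simp only [conjTranspose_mul, conjTranspose_mpow, L, R, mul_assoc]
    _ = wInner ρ hρ.1 s A B := by
        rw [trace_mul_comm, wInner, hL, ← hR]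
        simp only [mul_assoc]

lemma re_wInner_self_eq_norm_sq (s : ℝ) (A : Matrix n n ℂ) :
    (wInner ρ hρ.1 s A A).re = ‖weightedEmbedding hρ s A‖ ^ 2 := by
  rw [← inner_weightedEmbedding, ← RCLike.re_to_complex, inner_self_eq_norm_sq]

lemma re_wInner_self_nonneg (s : ℝ) (A : Matrix n n ℂ) : 0 ≤ (wInner ρ hρ.1 s A A).re := by
  rw [re_wInner_self_eq_norm_sq hρ]
  positivity

lemma re_wInner_self_pos (s : ℝ) {A : Matrix n n ℂ} (hA : A ≠ 0) :
    0 < (wInner ρ hρ.1 s A A).re := by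
  rw [re_wInner_self_eq_norm_sq hρ]
  exact pow_pos (norm_pos_iff.2 ((LinearEquiv.map_ne_zero_iff _).2 hA)) 2

end Weighted

section DetailedBalance

variable {n ι : Type*} [Fintype n] [DecidableEq n] [Fintype ι] {ρ : Matrix n n ℂ}

def IsDetailedBalanced (ρ : Matrix n n ℂ) (hρ : ρ.IsHermitian) (s : ℝ)
    (f : Module.End ℂ (Matrix n n ℂ)) : Prop :=
  ∀ A B, wInner ρ hρ s A (f B) = wInner ρ hρ s (f A) B

variable (hρ : ρ.PosDef) {s : ℝ}

namespace IsDetailedBalanced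

variable {f : Module.End ℂ (Matrix n n ℂ)}

lemma isSymmetric_conj (h : IsDetailedBalanced ρ hρ.1 s f) :
    ((weightedEmbedding hρ s).conj f).IsSymmetric :=
  LinearEquiv.isSymmetric_conj _ fun A B => by
    rw [inner_weightedEmbedding, inner_weightedEmbedding, h]

lemma re_wInner_map_self_nonneg (h : IsDetailedBalanced ρ hρ.1 s f)
    (hf : ∀ μ : ℝ, HasEigenvalue f (μ : ℂ) → 0 ≤ μ) (X : Matrix n n ℂ) :
    0 ≤ (wInner ρ hρ.1 s X (f X)).re := by
  have hT := (h.isSymmetric_conj hρ).isPositive_of_hasEigenvalue fun μ hμ =>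
    hf μ ((LinearEquiv.hasEigenvalue_conj_iff _ _ _).1 hμ)
  simpa [LinearEquiv.conj_apply, inner_weightedEmbedding, h X X]
    using hT.2 (weightedEmbedding hρ s X)

lemma re_wInner_map_self_le (h : IsDetailedBalanced ρ hρ.1 s f)
    (hf : ∀ μ : ℝ, HasEigenvalue f (μ : ℂ) → |μ| ≤ 1) (X : Matrix n n ℂ) :
    (wInner ρ hρ.1 s (f X) (f X)).re ≤ (wInner ρ hρ.1 s X X).re := by
  have hT := (h.isSymmetric_conj hρ).norm_map_le_of_hasEigenvalue (fun μ hμ =>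
    hf μ ((LinearEquiv.hasEigenvalue_conj_iff _ _ _).1 hμ)) (weightedEmbedding hρ s X)
  rw [re_wInner_self_eq_norm_sq hρ, re_wInner_self_eq_norm_sq hρ]
  gcongr
  simpa [LinearEquiv.conj_apply] using hT

variable {K : ι → Matrix n n ℂ}

lemma weightEquiv_krausMap (h : IsDetailedBalanced ρ hρ.1 s (krausMap K)) (B : Matrix n n ℂ) :
    weightEquiv hρ s (krausMap K B) = krausMap (fun u => (K u)ᴴ) (weightEquiv hρ s B) := by
  refine ext_iff_trace_mul_left.2 fun A => ?_
  simpa [wInner_eq_trace_mul_weightEquiv hρ, conjTranspose_krausMap, trace_krausMap_mul]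
    using h Aᴴ B

lemma hasEigenvalue_krausMap_iff (h : IsDetailedBalanced ρ hρ.1 s (krausMap K)) (μ : ℂ) :
    HasEigenvalue (krausMap K) μ ↔ HasEigenvalue (krausMap fun u => (K u)ᴴ) μ := by
  have hsim : krausMap K = (weightEquiv hρ s).symm.conj (krausMap fun u => (K u)ᴴ) :=
    LinearMap.ext fun B => by simp [LinearEquiv.conj_apply, ← h.weightEquiv_krausMap hρ]
  rw [hsim, LinearEquiv.hasEigenvalue_conj_iff]

lemma krausMap_adjoint_apply_self (h : IsDetailedBalanced ρ hρ.1 s (krausMap K))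
    (hK : ∑ u, K u * (K u)ᴴ = 1) : krausMap (fun u => (K u)ᴴ) ρ = ρ := by
  rw [← weightEquiv_apply_one hρ s, ← h.weightEquiv_krausMap hρ, krausMap_one hK]

end IsDetailedBalanced

end DetailedBalance

section KadisonSchwarz

variable {n ι : Type*} [Fintype n] [DecidableEq n] [Fintype ι] {ρ : Matrix n n ℂ}
  {K : ι → Matrix n n ℂ}

lemma re_wInner_one_krausMap_self_le (hρ : ρ.PosDef) (hK : ∑ u, K u * (K u)ᴴ = 1)
    (hρK : krausMap (fun u => (K u)ᴴ) ρ = ρ) (A : Matrix n n ℂ) :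
    (wInner ρ hρ.1 1 (krausMap K A) (krausMap K A)).re ≤ (wInner ρ hρ.1 1 A A).re := by
  set D := fun u => A * (K u)ᴴ - (K u)ᴴ * krausMap K A
  have hdiff : wInner ρ hρ.1 1 A A - wInner ρ hρ.1 1 (krausMap K A) (krausMap K A) =
      ∑ u, wInner ρ hρ.1 1 (D u) (D u) := by
    simp only [wInner_one_eq_trace_mul hρ, ← trace_sum, ← Finset.sum_mul, D,
      ← krausMap_conjTranspose_mul_self_sub hK, sub_mul, trace_sub, trace_krausMap_mul, hρK]
  have hnonneg : 0 ≤ (∑ u, wInner ρ hρ.1 1 (D u) (D u)).re := by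
    rw [Complex.re_sum]
    exact Finset.sum_nonneg fun u _ => re_wInner_self_nonneg hρ 1 (D u)
  rw [← hdiff, Complex.sub_re] at hnonneg
  linarith

lemma abs_le_one_of_hasEigenvalue_krausMap (hρ : ρ.PosDef) (hK : ∑ u, K u * (K u)ᴴ = 1)
    (hρK : krausMap (fun u => (K u)ᴴ) ρ = ρ) {μ : ℝ} (hμ : HasEigenvalue (krausMap K) (μ : ℂ)) :
    |μ| ≤ 1 := by
  obtain ⟨A, hA⟩ := hμ.exists_hasEigenvector
  have hle := re_wInner_one_krausMap_self_le hρ hK hρK A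
  have hpos := re_wInner_self_pos hρ 1 hA.2
  simp only [re_wInner_self_eq_norm_sq hρ] at hle hpos
  rw [hA.apply_eq_smul, map_smul, norm_smul, Complex.norm_real, Real.norm_eq_abs, mul_pow] at hle
  rw [← sq_le_one_iff_abs_le_one, ← sq_abs]
  exact (mul_le_iff_le_one_left hpos).1 hle

end KadisonSchwarz

theorem gap_MNM_ge_gap_N_general {n ι κ : Type*} [Fintype n] [DecidableEq n]
    [Fintype ι] [Fintype κ]
    (ρ : Matrix n n ℂ) (hρ : ρ.PosDef)
    (s : ℝ)
    (Mdual N Ndual : Matrix n n ℂ →ₗ[ℂ] Matrix n n ℂ)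
    (KM : ι → Matrix n n ℂ) (KN : κ → Matrix n n ℂ)
    (hMTP : ∑ u, (KM u)ᴴ * KM u = 1)
    (hMdual : ∀ X : Matrix n n ℂ, Mdual X = ∑ u, (KM u)ᴴ * X * KM u)
    (hN : ∀ X : Matrix n n ℂ, N X = ∑ u, KN u * X * (KN u)ᴴ)
    (hNdual : ∀ X : Matrix n n ℂ, Ndual X = ∑ u, (KN u)ᴴ * X * KN u)
    (hMDB : ∀ A B : Matrix n n ℂ,
      wInner ρ hρ.1 s A (Mdual B) = wInner ρ hρ.1 s (Mdual A) B)
    (hNDB : ∀ A B : Matrix n n ℂ,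
      wInner ρ hρ.1 s A (Ndual B) = wInner ρ hρ.1 s (Ndual A) B)
    (hspec : ∀ (μ : ℂ) (X : Matrix n n ℂ), X ≠ 0 → N X = μ • X →
      μ.im = 0 ∧ 0 ≤ μ.re ∧ μ.re ≤ 1)
    (g : ℝ)
    (hgapN : ∀ X : Matrix n n ℂ, wInner ρ hρ.1 s X 1 = 0 →
      (wInner ρ hρ.1 s X (Ndual X)).re ≤ (1 - g) * (wInner ρ hρ.1 s X X).re) :
    ∀ X : Matrix n n ℂ, wInner ρ hρ.1 s X 1 = 0 →
      (wInner ρ hρ.1 s X (Mdual (Ndual (Mdual X)))).re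
        ≤ (1 - g) * (wInner ρ hρ.1 s X X).re := by
  obtain rfl : Mdual = krausMap fun u => (KM u)ᴴ :=
    LinearMap.ext fun X => by simp [hMdual, krausMap_apply]
  obtain rfl : Ndual = krausMap fun u => (KN u)ᴴ :=
    LinearMap.ext fun X => by simp [hNdual, krausMap_apply]
  obtain rfl : N = krausMap KN := LinearMap.ext fun X => by simp [hN, krausMap_apply]
  have hMunital : ∑ u, (KM u)ᴴ * ((KM u)ᴴ)ᴴ = 1 := by simpa using hMTP
  have hM_contraction := IsDetailedBalanced.re_wInner_map_self_le hρ hMDB fun μ hμ =>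
    abs_le_one_of_hasEigenvalue_krausMap hρ hMunital
      (IsDetailedBalanced.krausMap_adjoint_apply_self hρ hMDB hMunital) hμ
  have hN_nonneg := IsDetailedBalanced.re_wInner_map_self_nonneg hρ hNDB fun μ hμ => by
    obtain ⟨X, hX⟩ :=
      ((IsDetailedBalanced.hasEigenvalue_krausMap_iff hρ hNDB μ).1 hμ).exists_hasEigenvector
    simpa using (hspec μ X hX.2 (by simpa using hX.apply_eq_smul)).2.1
  intro X hX
  have hMX_perp : wInner ρ hρ.1 s (krausMap (fun u => (KM u)ᴴ) X) 1 = 0 := by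
    rw [← hMDB, krausMap_one hMunital, hX]
  rw [hMDB]
  have hgap := hgapN _ hMX_perp
  rcases le_or_gt g 1 with hg | hg
  · exact hgap.trans (mul_le_mul_of_nonneg_left (hM_contraction X) (by linarith))
  · nlinarith [hN_nonneg X, hgapN X hX, re_wInner_self_nonneg hρ s X,
      re_wInner_self_nonneg hρ s (krausMap (fun u => (KM u)ᴴ) X)]

/-- Detailed-balanced measurements do not decrease the spectral gap: if `N` satisfies a
spectral-gap inequality with gap `g` on the orthogonal complement of the identity (for the
weighted inner product), then so does `M ∘ N ∘ M`, i.e. `gap(M∘N∘M) ≥ gap(N)`. -/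
theorem gap_MNM_ge_gap_N {n ι κ : Type*} [Fintype n] [DecidableEq n]
    [Fintype ι] [Fintype κ]
    (ρ : Matrix n n ℂ) (hρ : ρ.PosDef) (htr : ρ.trace = 1)
    (s : ℝ) (hs : s ∈ Set.Icc (0 : ℝ) 1)
    (M Mdual N Ndual : Matrix n n ℂ →ₗ[ℂ] Matrix n n ℂ)
    (KM : ι → Matrix n n ℂ) (KN : κ → Matrix n n ℂ)
    (hM : ∀ X : Matrix n n ℂ, M X = ∑ u, KM u * X * (KM u)ᴴ)
    (hMTP : ∑ u, (KM u)ᴴ * KM u = 1)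
    (hMdual : ∀ X : Matrix n n ℂ, Mdual X = ∑ u, (KM u)ᴴ * X * KM u)
    (hN : ∀ X : Matrix n n ℂ, N X = ∑ u, KN u * X * (KN u)ᴴ)
    (hNTP : ∑ u, (KN u)ᴴ * KN u = 1)
    (hNdual : ∀ X : Matrix n n ℂ, Ndual X = ∑ u, (KN u)ᴴ * X * KN u)
    (hMDB : ∀ A B : Matrix n n ℂ,
      wInner ρ hρ.1 s A (Mdual B) = wInner ρ hρ.1 s (Mdual A) B)
    (hNDB : ∀ A B : Matrix n n ℂ,
      wInner ρ hρ.1 s A (Ndual B) = wInner ρ hρ.1 s (Ndual A) B)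
    (hfix : N ρ = ρ)
    (hunique : ∀ σ : Matrix n n ℂ, σ.PosSemidef → σ.trace = 1 → N σ = σ → σ = ρ)
    (hspec : ∀ (μ : ℂ) (X : Matrix n n ℂ), X ≠ 0 → N X = μ • X →
      μ.im = 0 ∧ 0 ≤ μ.re ∧ μ.re ≤ 1)
    (g : ℝ)
    (hgapN : ∀ X : Matrix n n ℂ, wInner ρ hρ.1 s X 1 = 0 →
      (wInner ρ hρ.1 s X (Ndual X)).re ≤ (1 - g) * (wInner ρ hρ.1 s X X).re) :
    ∀ X : Matrix n n ℂ, wInner ρ hρ.1 s X 1 = 0 →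
      (wInner ρ hρ.1 s X (Mdual (Ndual (Mdual X)))).re
        ≤ (1 - g) * (wInner ρ hρ.1 s X X).re :=
  gap_MNM_ge_gap_N_general ρ hρ s Mdual N Ndual KM KN hMTP hMdual hN hNdual hMDB hNDB hspec g hgapN
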